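/- arXiv:0911.4580 — 7 statements merged into one kernel-verified Lean document; each statement's English description precedes it below -/
import Mathlib

section
/- For any n-dimensional parallelepiped P in Euclidean space, no translate of the interior of P can contain two distinct vertices of P; consequently, the minimal number c(P) of translates of int(P) needed to cover P is at least 2^n. -/
/-!
With respect to the basis `v`, the `i`-th coordinate functional is a surjective, hence open,
linear map sending `P` into an interval of length `1`; so it sends `int P`, and then any
translate of `int P`, into an open interval of length `1`. Two distinct vertices differ by
exactly `1` in some coordinate, so no translate of `int P` contains both. Each of the `2 ^ n`
vertices therefore needs its own translate in a cover of `P`.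
-/

open Set Pointwise Module

lemma IsOpenMap.mapsTo_interior_Ioo {X : Type*} [TopologicalSpace X] {f : X → ℝ}
    (hf : IsOpenMap f) {s : Set X} {a b : ℝ} (h : MapsTo f s (Icc a b)) :
    MapsTo f (interior s) (Ioo a b) :=
  interior_Icc (a := a) (b := b) ▸ hf.mapsTo_interior h

variable {ι E : Type*} [AddCommGroup E] [Module ℝ E]

lemma Module.Basis.isOpenMap_coord [TopologicalSpace E] [IsTopologicalAddGroup E]
    [ContinuousSMul ℝ E] (b : Basis ι ℝ E) (i : ι) : IsOpenMap (b.coord i) :=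
  LinearMap.isOpenMap_of_finiteDimensional _ fun s ↦ ⟨s • b i, by simp⟩

variable [Fintype ι]

lemma setOf_add_sum_smul_eq_vadd_parallelepiped (c : E) (v : ι → E) :
    {x | ∃ l : ι → ℝ, (∀ i, l i ∈ Icc (0 : ℝ) 1) ∧ x = c + ∑ i, l i • v i} =
      c +ᵥ parallelepiped v := by
  ext x
  simp [mem_vadd_set, mem_parallelepiped_iff, Pi.le_def, forall_and, eq_comm]

lemma add_sum_smul_mem_vadd_parallelepiped (c : E) (v : ι → E) {ε : ι → ℝ}
    (hε : ∀ i, ε i = 0 ∨ ε i = 1) : c + ∑ i, ε i • v i ∈ c +ᵥ parallelepiped v := by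
  rw [← setOf_add_sum_smul_eq_vadd_parallelepiped]
  refine ⟨ε, fun i ↦ ?_, rfl⟩
  rcases hε i with h | h <;> simp [h]

lemma Module.Basis.coord_add_sum_smul (b : Basis ι ℝ E) (c : E) (δ : ι → ℝ) (i : ι) :
    b.coord i (c + ∑ j, δ j • b j) = b.coord i c + δ i := by
  classical
  simp [Finsupp.single_apply]

variable [TopologicalSpace E] [IsTopologicalAddGroup E] [ContinuousSMul ℝ E]

lemma coord_mapsTo_interior_parallelepiped (b : Basis ι ℝ E) (i : ι) :
    MapsTo (b.coord i) (interior (parallelepiped b)) (Ioo 0 1) :=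
  (b.isOpenMap_coord i).mapsTo_interior_Ioo fun x hx ↦ by
    rw [parallelepiped_basis_eq] at hx
    exact hx i

lemma coord_sub_mem_Ioo_of_mem_vadd_interior (b : Basis ι ℝ E) {c t : E} {δ : ι → ℝ} (i : ι)
    (h : c + ∑ i, δ i • b i ∈ t +ᵥ interior (c +ᵥ parallelepiped b)) :
    δ i - b.coord i t ∈ Ioo 0 1 := by
  rw [interior_vadd] at h
  obtain ⟨_, ⟨q, hq, rfl⟩, hq'⟩ := h
  have hcoord := congrArg (b.coord i) hq'
  simp only [vadd_eq_add, map_add, b.coord_add_sum_smul] at hcoord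
  have hq_coord := coord_mapsTo_interior_parallelepiped b i hq
  rw [mem_Ioo] at hq_coord ⊢
  constructor <;> linarith

lemma eq_of_vertices_mem_vadd_interior (b : Basis ι ℝ E) {c t : E} {ε ε' : ι → ℝ}
    (hε : ∀ i, ε i = 0 ∨ ε i = 1) (hε' : ∀ i, ε' i = 0 ∨ ε' i = 1)
    (h : c + ∑ i, ε i • b i ∈ t +ᵥ interior (c +ᵥ parallelepiped b))
    (h' : c + ∑ i, ε' i • b i ∈ t +ᵥ interior (c +ᵥ parallelepiped b)) : ε = ε' := by
  funext i
  have h₁ := coord_sub_mem_Ioo_of_mem_vadd_interior b i h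
  have h₂ := coord_sub_mem_Ioo_of_mem_vadd_interior b i h'
  rw [mem_Ioo] at h₁ h₂
  rcases hε i with hi | hi <;> rcases hε' i with hi' | hi' <;> linarith

lemma two_pow_card_le_card_of_subset_iUnion_vadd_interior (b : Basis ι ℝ E) (c : E)
    (T : Finset E) (hT : c +ᵥ parallelepiped b ⊆ ⋃ t ∈ T, t +ᵥ interior (c +ᵥ parallelepiped b)) :
    2 ^ Fintype.card ι ≤ T.card := by
  classical
  set vertices := Fintype.piFinset fun _ : ι ↦ ({0, 1} : Finset ℝ)
  have mem_vertices {ε : ι → ℝ} : ε ∈ vertices ↔ ∀ i, ε i = 0 ∨ ε i = 1 := by simp [vertices]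
  calc 2 ^ Fintype.card ι = vertices.card := by simp [vertices]
    _ ≤ T.card := Finset.card_le_card_of_forall_subsingleton
      (fun ε t ↦ c + ∑ i, ε i • b i ∈ t +ᵥ interior (c +ᵥ parallelepiped b))
      (fun ε hε ↦ by
        simpa using hT (add_sum_smul_mem_vadd_parallelepiped c b (mem_vertices.1 hε)))
      fun t _ ε ⟨hε, hεt⟩ ε' ⟨hε', hε't⟩ ↦
        eq_of_vertices_mem_vadd_interior b (mem_vertices.1 hε) (mem_vertices.1 hε') hεt hε't

theorem stmt_0 (n : ℕ) (c : EuclideanSpace ℝ (Fin n)) (v : Fin n → EuclideanSpace ℝ (Fin n))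
    (hv : LinearIndependent ℝ v)
    (P : Set (EuclideanSpace ℝ (Fin n)))
    (hP : P = {x | ∃ l : Fin n → ℝ, (∀ i, l i ∈ Set.Icc (0:ℝ) 1) ∧ x = c + ∑ i, l i • v i}) :
    (∀ t : EuclideanSpace ℝ (Fin n), ∀ ε ε' : Fin n → ℝ,
      (∀ i, ε i = 0 ∨ ε i = 1) → (∀ i, ε' i = 0 ∨ ε' i = 1) → ε ≠ ε' →
      ¬ ((c + ∑ i, ε i • v i ∈ t +ᵥ interior P) ∧ (c + ∑ i, ε' i • v i ∈ t +ᵥ interior P))) ∧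
    (∀ T : Finset (EuclideanSpace ℝ (Fin n)),
      P ⊆ ⋃ t ∈ T, (t +ᵥ interior P) → 2 ^ n ≤ T.card) := by
  let b := basisOfLinearIndependentOfCardEqFinrank' v hv (by simp)
  have hb : ⇑b = v := coe_basisOfLinearIndependentOfCardEqFinrank' v hv _
  rw [setOf_add_sum_smul_eq_vadd_parallelepiped, ← hb] at hP
  subst hP
  refine ⟨fun t ε ε' hε hε' hne h ↦ hne ?_, fun T hT ↦ ?_⟩
  · rw [← hb] at h
    exact eq_of_vertices_mem_vadd_interior b hε hε' h.1 h.2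
  · simpa using two_pow_card_le_card_of_subset_iUnion_vadd_interior b c T hT
end

section
/- For every n-dimensional convex body K and all positive integers m with m ≤ n, the smallest r > 0 such that K can be covered by m translates of rK equals 1; that is, γ_m(K) = 1 for m ≤ n. -/
/-!
Suppose `K ⊆ ⋃ i, (x i + r • K)` with `r < 1` and fix an interior point `z` of `K`. There are
only `m ≤ n` vectors `x i - (1 - r) • z`, so some direction `u ≠ 0` makes a nonpositive inner
product with each of them. A point `y₀ ∈ K` maximising `⟪u, ·⟫` lies in some `x i + r • K`, whence
`⟪u, y₀⟫ ≤ (1 - r) ⟪u, z⟫ + r ⟪u, y₀⟫ < ⟪u, y₀⟫`, as `z` is interior. Covering with `r = 1` is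
trivial.
-/

open Pointwise

/-- `gamma m K` is the infimum of all `r > 0` such that `K` can be covered by
`m` translates of `r • K`. -/
noncomputable def gamma {E : Type*} [NormedAddCommGroup E] [NormedSpace ℝ E]
    (m : ℕ) (K : Set E) : ℝ :=
  sInf {r : ℝ | 0 < r ∧ ∃ x : Fin m → E, K ⊆ ⋃ i, (x i +ᵥ r • K)}

open Filter Topology Module
open scoped RealInnerProductSpace

section InnerProductSpace

variable {E : Type*} [NormedAddCommGroup E] [InnerProductSpace ℝ E]

theorem exists_ne_zero_forall_inner_nonpos [FiniteDimensional ℝ E] {ι : Type*} [Fintype ι]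
    [Nonempty ι] (hcard : Fintype.card ι ≤ finrank ℝ E) (w : ι → E) :
    ∃ u : E, u ≠ 0 ∧ ∀ i, ⟪w i, u⟫ ≤ 0 := by
  let L : E →ₗ[ℝ] ι → ℝ := LinearMap.pi fun i => (innerSL ℝ (w i)).toLinearMap
  by_cases hker : LinearMap.ker L = ⊥
  · have hinj := LinearMap.ker_eq_bot.mp hker
    have hrank : finrank ℝ E = finrank ℝ (ι → ℝ) := by
      have := LinearMap.finrank_le_finrank_of_injective hinj
      rw [finrank_fintype_fun_eq_card] at *
      omega
    obtain ⟨u, hu⟩ :=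
      (LinearMap.injective_iff_surjective_of_finrank_eq_finrank hrank).mp hinj fun _ => -1
    refine ⟨u, ?_, fun i => ?_⟩
    · rintro rfl
      simpa using congrFun hu (Classical.arbitrary ι)
    · exact (congrFun hu i).trans_le (by norm_num)
  · obtain ⟨u, hu, hu0⟩ := Submodule.exists_mem_ne_zero_of_ne_bot hker
    exact ⟨u, hu0, fun i => (congrFun (LinearMap.mem_ker.mp hu) i).le⟩

theorem exists_mem_inner_lt_of_mem_interior {K : Set E} {z u : E} (hz : z ∈ interior K)
    (hu : u ≠ 0) : ∃ y ∈ K, ⟪u, z⟫ < ⟪u, y⟫ := by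
  have hray : Tendsto (fun t : ℝ => z + t • u) (𝓝 0) (𝓝 z) :=
    (continuous_const.add (continuous_id.smul continuous_const)).tendsto' 0 z (by simp)
  have hK : ∀ᶠ t : ℝ in 𝓝[>] 0, z + t • u ∈ K :=
    nhdsWithin_le_nhds (hray.eventually (mem_interior_iff_mem_nhds.mp hz))
  obtain ⟨t, ht, htpos⟩ := (hK.and self_mem_nhdsWithin).exists
  refine ⟨_, ht, ?_⟩
  rw [inner_add_right, real_inner_smul_right, real_inner_self_eq_norm_sq]
  have : 0 < t * ‖u‖ ^ 2 := mul_pos htpos (by positivity)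
  linarith

theorem not_subset_iUnion_vadd_smul_of_lt_one [FiniteDimensional ℝ E] {ι : Type*} [Fintype ι]
    [Nonempty ι] (hcard : Fintype.card ι ≤ finrank ℝ E) {K : Set E} (hKc : IsCompact K)
    (hKint : (interior K).Nonempty) {r : ℝ} (hr0 : 0 ≤ r) (hr1 : r < 1) (x : ι → E) :
    ¬K ⊆ ⋃ i, (x i +ᵥ r • K) := by
  intro hcov
  obtain ⟨z, hz⟩ := hKint
  obtain ⟨u, hu0, hu⟩ := exists_ne_zero_forall_inner_nonpos hcard fun i => x i - (1 - r) • z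
  obtain ⟨y₀, hy₀, hmax⟩ :=
    hKc.exists_isMaxOn ⟨z, interior_subset hz⟩ (innerSL ℝ u).continuous.continuousOn
  obtain ⟨y, hy, hzy⟩ := exists_mem_inner_lt_of_mem_interior hz hu0
  have hy₀cov := hcov hy₀
  simp only [Set.mem_iUnion, Set.mem_vadd_set, Set.mem_smul_set, vadd_eq_add] at hy₀cov
  obtain ⟨i, _, ⟨c, hc, rfl⟩, rfl⟩ := hy₀cov
  have hxi : ⟪u, x i⟫ ≤ (1 - r) * ⟪u, z⟫ := by
    have := hu i
    rw [inner_sub_left, real_inner_smul_left, real_inner_comm, real_inner_comm u z] at this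
    linarith
  have hc_le : r * ⟪u, c⟫ ≤ r * ⟪u, x i + r • c⟫ := mul_le_mul_of_nonneg_left (hmax hc) hr0
  have hz_lt : (1 - r) * ⟪u, z⟫ < (1 - r) * ⟪u, x i + r • c⟫ :=
    mul_lt_mul_of_pos_left (hzy.trans_le (hmax hy)) (by linarith)
  have hsplit : ⟪u, x i + r • c⟫ = ⟪u, x i⟫ + r * ⟪u, c⟫ := by
    rw [inner_add_right, real_inner_smul_right]
  linarith

end InnerProductSpace

theorem stmt_1_general (n m : ℕ) (hm : 0 < m) (hmn : m ≤ n)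
    (K : Set (EuclideanSpace ℝ (Fin n)))
    (hKc : IsCompact K) (hKint : (interior K).Nonempty) :
    gamma m K = 1 := by
  have : Nonempty (Fin m) := Fin.pos_iff_nonempty.mp hm
  have hcard : Fintype.card (Fin m) ≤ finrank ℝ (EuclideanSpace ℝ (Fin n)) := by simpa using hmn
  have hone : (1 : ℝ) ∈
      {r : ℝ | 0 < r ∧ ∃ x : Fin m → EuclideanSpace ℝ (Fin n), K ⊆ ⋃ i, (x i +ᵥ r • K)} :=
    ⟨one_pos, 0, fun y hy => Set.mem_iUnion.mpr ⟨Classical.arbitrary _, by simpa using hy⟩⟩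
  refine le_antisymm (csInf_le ⟨0, fun r hr => hr.1.le⟩ hone) (le_csInf ⟨1, hone⟩ ?_)
  rintro r ⟨hr0, x, hcov⟩
  by_contra! hr1
  exact not_subset_iUnion_vadd_smul_of_lt_one hcard hKc hKint hr0.le hr1 x hcov

theorem stmt_1 (n m : ℕ) (hm : 0 < m) (hmn : m ≤ n)
    (K : Set (EuclideanSpace ℝ (Fin n)))
    (hKc : IsCompact K) (hKconv : Convex ℝ K) (hKint : (interior K).Nonempty) :
    gamma m K = 1 :=
  stmt_1_general n m hm hmn K hKc hKint
end

section
/- For the three-dimensional ℓ_p unit ball K_p = {(x,y,z) : |x|^p + |y|^p + |z|^p ≤ 1} with 1 ≤ p ≤ 2, K_p is covered by the six translates √(2/3)·K_p ± ((1/3)^{1/p},0,0), √(2/3)·K_p ± (0,(1/3)^{1/p},0), √(2/3)·K_p ± (0,0,(1/3)^{1/p}). Hence γ₆(K_p) ≤ √(2/3). -/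
open Pointwise

/-!
Let `w ∈ K_p`, let `x` be a coordinate of largest modulus and translate by `±a e_x` with the
sign of `x`, where `a ^ p = 1/3`. Superadditivity of `t ↦ t ^ p` on `[0, ∞)` gives
`||x| - a| ^ p ≤ ||x| ^ p - 1/3|`. If `|x| ^ p ≥ 1/3`, the translated point has
`ℓ_p`-mass at most `1 - 1/3`; otherwise the other two coordinates contribute at most
`2 |x| ^ p`, so the mass is at most `1/3 + |x| ^ p ≤ 2/3`. Finally `2/3 ≤ √(2/3) ^ p` for `p ≤ 2`.
-/

lemma gamma_le_of_subset_iUnion {E : Type*} [NormedAddCommGroup E] [NormedSpace ℝ E]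
    {m : ℕ} {K : Set E} {r : ℝ} (hr : 0 < r) (x : Fin m → E)
    (hK : K ⊆ ⋃ i, x i +ᵥ r • K) : gamma m K ≤ r :=
  csInf_le ⟨0, fun _ h => h.1.le⟩ ⟨hr, x, hK⟩

lemma le_total_three {α : Type*} [LinearOrder α] (x y z : α) :
    (y ≤ x ∧ z ≤ x) ∨ (x ≤ y ∧ z ≤ y) ∨ (x ≤ z ∧ y ≤ z) := by
  rcases le_total y x with hyx | hxy
  · rcases le_total z x with hzx | hxz
    · exact Or.inl ⟨hyx, hzx⟩
    · exact Or.inr (Or.inr ⟨hxz, hyx.trans hxz⟩)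
  · rcases le_total z y with hzy | hyz
    · exact Or.inr (Or.inl ⟨hxy, hzy⟩)
    · exact Or.inr (Or.inr ⟨hxy.trans hyz, hyz⟩)

lemma abs_abs_sub_eq_or (x a : ℝ) : |(|x| - a)| = |x - a| ∨ |(|x| - a)| = |x + a| := by
  rcases le_total 0 x with hx | hx
  · exact Or.inl (by rw [abs_of_nonneg hx])
  · exact Or.inr (by rw [abs_of_nonpos hx, ← abs_neg]; ring_nf)

lemma Real.self_le_sqrt_rpow {x p : ℝ} (hx0 : 0 < x) (hx1 : x ≤ 1) (hp : p ≤ 2) :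
    x ≤ √x ^ p := by
  rw [Real.sqrt_eq_rpow, ← Real.rpow_mul hx0.le]
  conv_lhs => rw [← Real.rpow_one x]
  exact Real.rpow_le_rpow_of_exponent_ge hx0 hx1 (by linarith)

lemma Real.abs_sub_rpow_le_abs_rpow_sub {p u v : ℝ} (hp : 1 ≤ p) (hu : 0 ≤ u) (hv : 0 ≤ v) :
    |u - v| ^ p ≤ |u ^ p - v ^ p| := by
  wlog hvu : v ≤ u generalizing u v
  · rw [abs_sub_comm, abs_sub_comm (u ^ p)]
    exact this hv hu (le_of_not_ge hvu)
  have hsuper := Real.add_rpow_le_rpow_add (sub_nonneg.2 hvu) hv hp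
  rw [sub_add_cancel] at hsuper
  have hpow := Real.rpow_le_rpow hv hvu (zero_le_one.trans hp)
  rw [abs_of_nonneg (sub_nonneg.2 hvu), abs_of_nonneg (sub_nonneg.2 hpow)]
  linarith

section lpBall

variable {p : ℝ}

def lpBall (p : ℝ) : Set (ℝ × ℝ × ℝ) :=
  {w | |w.1| ^ p + |w.2.1| ^ p + |w.2.2| ^ p ≤ 1}

lemma mem_vadd_smul_lpBall_iff {s : ℝ} (hs : 0 < s) {c w : ℝ × ℝ × ℝ} :
    w ∈ c +ᵥ s • lpBall p ↔
      |w.1 - c.1| ^ p + |w.2.1 - c.2.1| ^ p + |w.2.2 - c.2.2| ^ p ≤ s ^ p := by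
  have habs : ∀ t : ℝ, |s⁻¹ * t| ^ p = |t| ^ p / s ^ p := fun t => by
    rw [abs_mul, abs_inv, abs_of_pos hs, inv_mul_eq_div, Real.div_rpow (abs_nonneg _) hs.le]
  rw [Set.mem_vadd_set_iff_neg_vadd_mem, Set.mem_smul_set_iff_inv_smul_mem₀ hs.ne', lpBall]
  simp only [vadd_eq_add, Prod.smul_fst, Prod.smul_snd, Prod.fst_sub, Prod.snd_sub,
    smul_eq_mul, Set.mem_ofPred_eq, neg_add_eq_sub, habs,
    ← add_div, div_le_one (Real.rpow_pos_of_pos hs p)]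

variable {a : ℝ}

lemma abs_abs_sub_rpow_add_add_le (hp : 1 ≤ p) (ha0 : 0 ≤ a) (ha : a ^ p = 1 / 3)
    {t Y Z : ℝ} (ht : 0 ≤ t) (hsum : t ^ p + Y + Z ≤ 1) (hY : Y ≤ t ^ p) (hZ : Z ≤ t ^ p) :
    |t - a| ^ p + Y + Z ≤ 2 / 3 := by
  have h := Real.abs_sub_rpow_le_abs_rpow_sub hp ht ha0
  rw [ha] at h
  rcases abs_cases (t ^ p - 1 / 3) with ⟨e, -⟩ | ⟨e, -⟩ <;> rw [e] at h <;> linarith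

lemma abs_sub_rpow_add_add_le_or (hp : 1 ≤ p) (ha0 : 0 ≤ a) (ha : a ^ p = 1 / 3)
    {x Y Z : ℝ} (hsum : |x| ^ p + Y + Z ≤ 1) (hY : Y ≤ |x| ^ p) (hZ : Z ≤ |x| ^ p) :
    |x - a| ^ p + Y + Z ≤ 2 / 3 ∨ |x + a| ^ p + Y + Z ≤ 2 / 3 := by
  have h := abs_abs_sub_rpow_add_add_le hp ha0 ha (abs_nonneg x) hsum hY hZ
  rcases abs_abs_sub_eq_or x a with e | e
  · exact Or.inl (e ▸ h)
  · exact Or.inr (e ▸ h)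

theorem lpBall_subset_six_translates (hp : 1 ≤ p) (ha0 : 0 ≤ a) (ha : a ^ p = 1 / 3)
    {s : ℝ} (hs : 0 < s) (hsp : 2 / 3 ≤ s ^ p) :
    lpBall p ⊆ (((a, 0, 0) : ℝ × ℝ × ℝ) +ᵥ s • lpBall p) ∪
      (((-a, 0, 0) : ℝ × ℝ × ℝ) +ᵥ s • lpBall p) ∪
      (((0, a, 0) : ℝ × ℝ × ℝ) +ᵥ s • lpBall p) ∪ (((0, -a, 0) : ℝ × ℝ × ℝ) +ᵥ s • lpBall p) ∪
      (((0, 0, a) : ℝ × ℝ × ℝ) +ᵥ s • lpBall p) ∪ (((0, 0, -a) : ℝ × ℝ × ℝ) +ᵥ s • lpBall p) := by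
  intro w hw
  have hw : |w.1| ^ p + |w.2.1| ^ p + |w.2.2| ^ p ≤ 1 := hw
  have mem : ∀ c : ℝ × ℝ × ℝ,
      |w.1 - c.1| ^ p + |w.2.1 - c.2.1| ^ p + |w.2.2 - c.2.2| ^ p ≤ 2 / 3 →
        w ∈ c +ᵥ s • lpBall p :=
    fun c h => (mem_vadd_smul_lpBall_iff hs).2 (h.trans hsp)
  simp only [Set.mem_union]
  obtain ⟨h1, h2⟩ | ⟨h1, h2⟩ | ⟨h1, h2⟩ := le_total_three (|w.1| ^ p) (|w.2.1| ^ p) (|w.2.2| ^ p)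
  · obtain h | h := abs_sub_rpow_add_add_le_or hp ha0 ha hw h1 h2
    · exact .inl <| .inl <| .inl <| .inl <| .inl <| mem _ (by simp only [sub_zero]; linarith)
    · exact .inl <| .inl <| .inl <| .inl <| .inr <|
        mem _ (by simp only [sub_zero, sub_neg_eq_add]; linarith)
  · obtain h | h := abs_sub_rpow_add_add_le_or hp ha0 ha (by linarith) h1 h2
    · exact .inl <| .inl <| .inl <| .inr <| mem _ (by simp only [sub_zero]; linarith)
    · exact .inl <| .inl <| .inr <| mem _ (by simp only [sub_zero, sub_neg_eq_add]; linarith)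
  · obtain h | h := abs_sub_rpow_add_add_le_or hp ha0 ha (by linarith) h1 h2
    · exact .inl <| .inr <| mem _ (by simp only [sub_zero]; linarith)
    · exact .inr <| mem _ (by simp only [sub_zero, sub_neg_eq_add]; linarith)

end lpBall

theorem stmt_11 (p : ℝ) (hp1 : 1 ≤ p) (hp2 : p ≤ 2)
    (Kp : Set (ℝ × ℝ × ℝ))
    (hKp : Kp = {w : ℝ × ℝ × ℝ | |w.1| ^ p + |w.2.1| ^ p + |w.2.2| ^ p ≤ 1})
    (a s : ℝ) (ha : a = ((1:ℝ)/3) ^ (1/p)) (hs : s = Real.sqrt (2/3)) :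
    Kp ⊆ ((( a, 0, 0) : ℝ × ℝ × ℝ) +ᵥ s • Kp) ∪ (((-a, 0, 0) : ℝ × ℝ × ℝ) +ᵥ s • Kp) ∪
        (((0, a, 0) : ℝ × ℝ × ℝ) +ᵥ s • Kp) ∪ (((0, -a, 0) : ℝ × ℝ × ℝ) +ᵥ s • Kp) ∪
        (((0, 0, a) : ℝ × ℝ × ℝ) +ᵥ s • Kp) ∪ (((0, 0, -a) : ℝ × ℝ × ℝ) +ᵥ s • Kp) ∧
      gamma 6 Kp ≤ Real.sqrt (2/3) := by
  obtain rfl : Kp = lpBall p := hKp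
  subst hs
  have hs0 : 0 < √(2 / 3 : ℝ) := Real.sqrt_pos.2 (by norm_num)
  have ha0 : 0 ≤ a := ha ▸ by positivity
  have hap : a ^ p = 1 / 3 := by
    rw [ha, one_div p, Real.rpow_inv_rpow (by norm_num) (by positivity)]
  have cover := lpBall_subset_six_translates hp1 ha0 hap hs0
    (Real.self_le_sqrt_rpow (by norm_num) (by norm_num) hp2)
  refine ⟨cover, gamma_le_of_subset_iUnion hs0
    ![(a, 0, 0), (-a, 0, 0), (0, a, 0), (0, -a, 0), (0, 0, a), (0, 0, -a)] fun w hw => ?_⟩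
  simpa [Fin.exists_fin_succ, or_assoc] using cover hw
end

section
/- For all real p with 2 ≤ p < ∞, one has (2/3)^p + 2·(1/3)^p ≤ (2/3)^{p/2}. -/
/-! With `t = p / 2 ≥ 1` the left side is `(4/9)^t + (1/9)^t + (1/9)^t`, and superadditivity of
`x ↦ x ^ t` on `[0, ∞)` bounds it by `(4/9 + 1/9 + 1/9)^t = (2/3)^t`. -/

lemma Real.rpow_eq_sq_rpow_half {x : ℝ} (hx : 0 ≤ x) (p : ℝ) : x ^ p = (x ^ 2) ^ (p / 2) := by
  rw [← Real.rpow_natCast, ← Real.rpow_mul hx, Nat.cast_ofNat, mul_div_cancel₀ p two_ne_zero]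

theorem stmt_13 (p : ℝ) (hp : 2 ≤ p) :
    ((2:ℝ)/3) ^ p + 2 * ((1:ℝ)/3) ^ p ≤ ((2:ℝ)/3) ^ (p/2) := by
  have ht : 1 ≤ p / 2 := by linarith
  have h₁ := Real.add_rpow_le_rpow_add (by norm_num : (0:ℝ) ≤ 4/9) (by norm_num : (0:ℝ) ≤ 1/9) ht
  have h₂ := Real.add_rpow_le_rpow_add (by norm_num : (0:ℝ) ≤ 5/9) (by norm_num : (0:ℝ) ≤ 1/9) ht
  rw [Real.rpow_eq_sq_rpow_half (by norm_num : (0:ℝ) ≤ 2/3),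
    Real.rpow_eq_sq_rpow_half (by norm_num : (0:ℝ) ≤ 1/3)]
  norm_num at h₁ h₂ ⊢
  linarith
end

section
/- For all real p with 2 ≤ p < ∞, one has 3·((1/3)^{1/p} − 1/3)^p ≤ (2/3)^{p/2}; equivalently, the point ((1/3)^{1/p}, (1/3)^{1/p}, (1/3)^{1/p}) belongs to √(2/3)·K_p + (1/3,1/3,1/3). -/
/-!
Put `a = (1/3)^(1/p)`, so that `a^p = 1/3` and `1/3 ≤ a ≤ 1`. Since `a ≤ 1`, `a - 1/3 ≤ (2/3) a`,
hence `3 (a - 1/3)^p ≤ 3 (2/3)^p a^p = (2/3)^p ≤ (2/3)^(p/2)`. The membership claim is the same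
inequality, read as `(a - 1/3, a - 1/3, a - 1/3) ∈ √(2/3) • K_p`.
-/

open Pointwise

namespace Real

theorem rpow_one_div_sub_self_rpow_le {c p : ℝ} (hc0 : 0 ≤ c) (hc1 : c ≤ 1) (hp : 1 ≤ p) :
    (c ^ (1 / p) - c) ^ p ≤ (1 - c) ^ p * c := by
  have hp0 : 0 < p := by linarith
  have ha1 : c ^ (1 / p) ≤ 1 := rpow_le_one hc0 hc1 (by positivity)
  have hca : c ≤ c ^ (1 / p) := self_le_rpow_of_le_one hc0 hc1 (div_le_one_of_le₀ hp hp0.le)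
  have hsub : c ^ (1 / p) - c ≤ (1 - c) * c ^ (1 / p) := by nlinarith
  calc (c ^ (1 / p) - c) ^ p ≤ ((1 - c) * c ^ (1 / p)) ^ p :=
        rpow_le_rpow (sub_nonneg.2 hca) hsub hp0.le
    _ = (1 - c) ^ p * c := by
        rw [mul_rpow (by linarith) (by positivity), one_div, rpow_inv_rpow hc0 hp0.ne']

end Real

theorem mem_smul_lpBall_iff {p r : ℝ} (hr : 0 < r) (w : ℝ × ℝ × ℝ) :
    w ∈ r • {w : ℝ × ℝ × ℝ | |w.1| ^ p + |w.2.1| ^ p + |w.2.2| ^ p ≤ 1} ↔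
      |w.1| ^ p + |w.2.1| ^ p + |w.2.2| ^ p ≤ r ^ p := by
  have hrp : 0 < r ^ p := Real.rpow_pos_of_pos hr p
  rw [Set.mem_smul_set_iff_inv_smul_mem₀ hr.ne', Set.mem_ofPred_eq]
  simp only [Prod.smul_fst, Prod.smul_snd, smul_eq_mul, abs_mul, abs_inv, abs_of_pos hr]
  rw [Real.mul_rpow (by positivity) (abs_nonneg _), Real.mul_rpow (by positivity) (abs_nonneg _),
    Real.mul_rpow (by positivity) (abs_nonneg _), ← mul_add, ← mul_add,
    Real.inv_rpow hr.le, inv_mul_le_iff₀ hrp, mul_one]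

theorem stmt_14 (p : ℝ) (hp : 2 ≤ p)
    (Kp : Set (ℝ × ℝ × ℝ))
    (hKp : Kp = {w : ℝ × ℝ × ℝ | |w.1| ^ p + |w.2.1| ^ p + |w.2.2| ^ p ≤ 1})
    (a : ℝ) (ha : a = ((1:ℝ)/3) ^ (1/p)) :
    3 * (a - 1/3) ^ p ≤ ((2:ℝ)/3) ^ (p/2) ∧
      ((a, a, a) : ℝ × ℝ × ℝ) ∈ Real.sqrt (2/3) • Kp + {((1/3, 1/3, 1/3) : ℝ × ℝ × ℝ)} := by
  subst hKp ha
  set b := ((1:ℝ)/3) ^ (1/p) - 1/3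
  have hcube : 3 * b ^ p ≤ ((2:ℝ)/3) ^ (p/2) :=
    calc 3 * b ^ p ≤ 3 * ((1 - 1/3) ^ p * (1/3)) := by
          gcongr; exact Real.rpow_one_div_sub_self_rpow_le (by norm_num) (by norm_num) (by linarith)
      _ = ((2:ℝ)/3) ^ p := by norm_num; ring
      _ ≤ ((2:ℝ)/3) ^ (p/2) := Real.rpow_le_rpow_of_exponent_ge (by norm_num) (by norm_num) (by linarith)
  have hb : 0 ≤ b :=
    sub_nonneg.2 (Real.self_le_rpow_of_le_one (by norm_num) (by norm_num) (by rw [div_le_one] <;> linarith))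
  refine ⟨hcube, Set.mem_add.2 ⟨(b, b, b), ?_, _, rfl, by simp only [b, Prod.mk_add_mk, sub_add_cancel]⟩⟩
  rw [mem_smul_lpBall_iff (Real.sqrt_pos.2 (by norm_num)), ← Real.rpow_div_two_eq_sqrt _ (by norm_num)]
  simp only [abs_of_nonneg hb]
  linarith
end

section
/- Every n-dimensional convex body K of constant width 1 satisfies 1 − √(n/(2n+2)) ≤ r(K) and R(K) ≤ √(n/(2n+2)), where r(K) and R(K) are the inradius and circumradius of K; in particular R(K)/r(K) ≤ (√(2n²+2n) + n)/(n+2). -/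
/-- A convex body `K` has constant width `w` if for every unit direction `u` the
distance between the two supporting hyperplanes orthogonal to `u` equals `w`. -/
def HasConstantWidth {n : ℕ} (K : Set (EuclideanSpace ℝ (Fin n))) (w : ℝ) : Prop :=
  ∀ u : EuclideanSpace ℝ (Fin n), ‖u‖ = 1 →
    sSup ((fun x => (inner ℝ u x : ℝ)) '' K) - sInf ((fun x => (inner ℝ u x : ℝ)) '' K) = w

/-- The inradius of `K`. -/
noncomputable def inradius {n : ℕ} (K : Set (EuclideanSpace ℝ (Fin n))) : ℝ :=
  sSup {r : ℝ | 0 ≤ r ∧ ∃ c, Metric.closedBall c r ⊆ K}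

/-- The circumradius of `K`. -/
noncomputable def circumradius {n : ℕ} (K : Set (EuclideanSpace ℝ (Fin n))) : ℝ :=
  sInf {R : ℝ | 0 ≤ R ∧ ∃ c, K ⊆ Metric.closedBall c R}

/-! Jung's theorem: a set of diameter `d` in an `m`-dimensional Euclidean space lies in a ball of
radius `d √(m / (2m + 2))`. By Helly's theorem it suffices to treat `m + 1` points. The center `c`
of their smallest enclosing ball lies in the convex hull of the points at the maximal distance `R`;
writing `c = ∑ w_q q` over these, `∑ w_q ‖p - q‖² = 2R²` for each of them, while this sum is at most
`d² (1 - w_p)`, and some weight `w_p` is at least `1 / (m + 1)`.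

If a body of constant width `w` lies in `B(c, s)`, then `B(c, w - s)` lies in it: a point of
`B(c, w - s)` outside the body is separated from it by a hyperplane, and the width in the normal
direction would then be less than `w`. -/

open Finset Metric Filter Topology Module
open scoped RealInnerProductSpace

section InnerProductSpace

variable {E : Type*} [NormedAddCommGroup E] [InnerProductSpace ℝ E]

theorem exists_mem_forall_norm_sub_sq_le_inner {s : Set E} (hs : Convex ℝ s) (hsc : IsComplete s)
    (hne : s.Nonempty) (x : E) : ∃ q ∈ s, ∀ p ∈ s, ‖q - x‖ ^ 2 ≤ ⟪p - x, q - x⟫ := by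
  obtain ⟨q, hq, hmin⟩ := exists_norm_eq_iInf_of_complete_convex hne hsc hs x
  refine ⟨q, hq, fun p hp => ?_⟩
  have hobtuse := (norm_eq_iInf_iff_real_inner_le_zero hs hq).1 hmin p hp
  have hsplit : ⟪p - x, q - x⟫ = ‖q - x‖ ^ 2 - ⟪x - q, p - q⟫ := by
    rw [show p - x = (p - q) + (q - x) by abel, inner_add_left, real_inner_self_eq_norm_sq,
      real_inner_comm, show q - x = -(x - q) by abel, inner_neg_left, norm_neg]
    ring
  linarith

theorem eventually_dist_add_smul_lt {p c v : E} {R : ℝ} (hpc : dist p c ≤ R)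
    (hv : dist p c = R → 0 < ⟪p - c, v⟫) : ∀ᶠ t in 𝓝[>] (0 : ℝ), dist p (c + t • v) < R := by
  have hcont : Continuous fun t : ℝ => dist p (c + t • v) := by fun_prop
  rcases hpc.lt_or_eq with hlt | heq
  · refine nhdsWithin_le_nhds ((hcont.tendsto 0).eventually (gt_mem_nhds ?_))
    simpa using hlt
  · have hsmall : ∀ᶠ t in 𝓝 (0 : ℝ), t * ‖v‖ ^ 2 < 2 * ⟪p - c, v⟫ :=
      ((continuous_id.mul continuous_const).tendsto 0).eventually
        (gt_mem_nhds (by simpa using hv heq))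
    filter_upwards [nhdsWithin_le_nhds hsmall, self_mem_nhdsWithin] with t ht (ht0 : 0 < t)
    -- `dist p (c + t • v) ^ 2 = R ^ 2 - t * (2 ⟪p - c, v⟫ - t ‖v‖²)`
    have hsq : dist p (c + t • v) ^ 2 < R ^ 2 := by
      rw [dist_eq_norm, show p - (c + t • v) = (p - c) - t • v by abel, norm_sub_sq_real,
        real_inner_smul_right, norm_smul, Real.norm_of_nonneg ht0.le, ← dist_eq_norm, heq]
      nlinarith
    exact lt_of_pow_lt_pow_left₀ 2 (dist_nonneg.trans hpc) hsq

theorem mem_convexHull_filter_dist_eq {P : Finset E} {c : E} {R : ℝ}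
    (hc : c ∈ convexHull ℝ (P : Set E)) (hR : ∀ p ∈ P, dist p c ≤ R)
    (hmin : ∀ x ∈ convexHull ℝ (P : Set E), ∃ p ∈ P, R ≤ dist p x) :
    c ∈ convexHull ℝ (P.filter (dist · c = R) : Set E) := by
  set T := P.filter (dist · c = R)
  by_contra hcT
  obtain ⟨q, hqP, hq⟩ : ∃ q ∈ convexHull ℝ (P : Set E), ∀ p ∈ T, 0 < ⟪p - c, q - c⟫ := by
    rcases T.eq_empty_or_nonempty with hT | hT
    · exact ⟨c, hc, by simp [hT]⟩
    obtain ⟨q, hqT, hq⟩ := exists_mem_forall_norm_sub_sq_le_inner (convex_convexHull ℝ _)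
      (T.finite_toSet.isCompact_convexHull ℝ).isComplete hT.to_set.convexHull c
    have hqc : 0 < ‖q - c‖ ^ 2 := by
      have : q - c ≠ 0 := sub_ne_zero.2 (ne_of_mem_of_not_mem hqT hcT)
      positivity
    exact ⟨q, convexHull_mono (coe_subset.2 (filter_subset _ P)) hqT,
      fun p hp => hqc.trans_le (hq p (subset_convexHull ℝ _ hp))⟩
  have hcloser : ∀ᶠ t in 𝓝[>] (0 : ℝ), ∀ p ∈ P, dist p (c + t • (q - c)) < R :=
    P.eventually_all.2 fun p hp =>
      eventually_dist_add_smul_lt (hR p hp) fun h => hq p (mem_filter.2 ⟨hp, h⟩)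
  obtain ⟨t, ht, ht01⟩ := (hcloser.and (Ioo_mem_nhdsGT one_pos)).exists
  obtain ⟨p, hp, hle⟩ := hmin _
    ((convex_convexHull ℝ _).add_smul_sub_mem hc hqP ⟨ht01.1.le, ht01.2.le⟩)
  exact (ht p hp).not_ge hle

theorem sum_mul_norm_sub_sq_eq {ι : Type*} {s : Finset ι} {w : ι → ℝ} {z : ι → E} {c : E}
    (hw : ∑ i ∈ s, w i = 1) (hc : ∑ i ∈ s, w i • z i = c) (x : E) :
    ∑ i ∈ s, w i * ‖x - z i‖ ^ 2 = ‖x - c‖ ^ 2 + ∑ i ∈ s, w i * ‖z i - c‖ ^ 2 := by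
  have hbar : ∑ i ∈ s, w i • (z i - c) = 0 := by
    simp only [smul_sub, sum_sub_distrib, ← sum_smul, hw, hc, one_smul, sub_self]
  calc ∑ i ∈ s, w i * ‖x - z i‖ ^ 2
      = ∑ i ∈ s, (w i * ‖x - c‖ ^ 2 - 2 * ⟪x - c, w i • (z i - c)⟫ + w i * ‖z i - c‖ ^ 2) :=
        sum_congr rfl fun i _ => by
          rw [show x - z i = (x - c) - (z i - c) by abel, norm_sub_sq_real, real_inner_smul_right]
          ring
    _ = ‖x - c‖ ^ 2 + ∑ i ∈ s, w i * ‖z i - c‖ ^ 2 := by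
        rw [sum_add_distrib, sum_sub_distrib, ← sum_mul, ← mul_sum, ← inner_sum, hbar, hw,
          inner_zero_right]
        ring

theorem two_mul_sq_le_of_mem_convexHull {T : Finset E} {c : E} {R d : ℝ}
    (hc : c ∈ convexHull ℝ (T : Set E)) (hR : ∀ p ∈ T, dist p c = R)
    (hd : ∀ p ∈ T, ∀ q ∈ T, dist p q ≤ d) : 2 * R ^ 2 ≤ d ^ 2 * (1 - (#T : ℝ)⁻¹) := by
  classical
  obtain ⟨w, hw0, hw1, hwc⟩ := Finset.mem_convexHull'.1 hc
  have hT : T.Nonempty := nonempty_of_sum_ne_zero (hw1 ▸ one_ne_zero)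
  have hsum_eq : ∀ p ∈ T, ∑ q ∈ T, w q * ‖p - q‖ ^ 2 = 2 * R ^ 2 := by
    intro p hp
    have hsteiner := sum_mul_norm_sub_sq_eq (z := id) hw1 hwc p
    simp only [id] at hsteiner
    rw [hsteiner, ← dist_eq_norm, hR p hp,
      sum_congr rfl fun q hq => by rw [← dist_eq_norm, hR q hq], ← sum_mul, hw1]
    ring
  have hsum_le : ∀ p ∈ T, ∑ q ∈ T, w q * ‖p - q‖ ^ 2 ≤ d ^ 2 * (1 - w p) := by
    intro p hp
    have hterm : ∀ q ∈ T.erase p, w q * ‖p - q‖ ^ 2 ≤ d ^ 2 * w q := fun q hq => by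
      rw [mul_comm (d ^ 2), ← dist_eq_norm]
      exact mul_le_mul_of_nonneg_left
        (pow_le_pow_left₀ dist_nonneg (hd p hp q (mem_of_mem_erase hq)) 2)
        (hw0 q (mem_of_mem_erase hq))
    calc ∑ q ∈ T, w q * ‖p - q‖ ^ 2 = ∑ q ∈ T.erase p, w q * ‖p - q‖ ^ 2 := by
          rw [← add_sum_erase T _ hp, sub_self, norm_zero]
          ring
      _ ≤ ∑ q ∈ T.erase p, d ^ 2 * w q := sum_le_sum hterm
      _ = d ^ 2 * (1 - w p) := by
          rw [← mul_sum, ← hw1, ← add_sum_erase T w hp, add_sub_cancel_left]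
  -- some weight is at least the average weight `(#T)⁻¹`
  obtain ⟨p, hp, hwp⟩ := exists_le_of_sum_le hT (f := fun _ => (#T : ℝ)⁻¹) (g := w)
    (by rw [sum_const, nsmul_eq_mul, mul_inv_cancel₀ (by exact_mod_cast hT.card_ne_zero), hw1])
  calc 2 * R ^ 2 = ∑ q ∈ T, w q * ‖p - q‖ ^ 2 := (hsum_eq p hp).symm
    _ ≤ d ^ 2 * (1 - w p) := hsum_le p hp
    _ ≤ d ^ 2 * (1 - (#T : ℝ)⁻¹) := by gcongr

theorem le_mul_sqrt_of_two_mul_sq_le {R d k m : ℝ} (hR : 0 ≤ R) (hd : 0 ≤ d) (hk : 1 ≤ k)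
    (hkm : k ≤ m + 1) (h : 2 * R ^ 2 ≤ d ^ 2 * (1 - k⁻¹)) : R ≤ d * √(m / (2 * m + 2)) := by
  have hm : 0 ≤ m := by linarith
  rw [← Real.sqrt_sq hd, ← Real.sqrt_mul (sq_nonneg d), Real.le_sqrt hR (by positivity)]
  calc R ^ 2 ≤ d ^ 2 * (1 - k⁻¹) / 2 := by linarith
    _ ≤ d ^ 2 * (1 - (m + 1)⁻¹) / 2 := by gcongr
    _ = d ^ 2 * (m / (2 * m + 2)) := by field_simp; ring

theorem exists_forall_dist_le_mul_sqrt_of_card_le {P : Finset E} {m : ℕ} {d : ℝ}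
    (hcard : #P ≤ m + 1) (hd : ∀ p ∈ P, ∀ q ∈ P, dist p q ≤ d) :
    ∃ c, ∀ p ∈ P, dist p c ≤ d * √(m / (2 * m + 2)) := by
  rcases P.eq_empty_or_nonempty with rfl | hP
  · exact ⟨0, by simp⟩
  have hfar : Continuous fun x => P.sup' hP (dist · x) :=
    continuous_iff_continuousAt.2 fun x => ContinuousAt.finset_sup'_apply hP fun p _ =>
      (continuous_const.dist continuous_id).continuousAt
  -- a smallest ball about `P` among those centered in the convex hull of `P`
  obtain ⟨c, hcP, hmin⟩ := (P.finite_toSet.isCompact_convexHull ℝ).exists_isMinOn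
    (hP.to_set.convexHull) hfar.continuousOn
  set R := P.sup' hP (dist · c)
  have hR : ∀ p ∈ P, dist p c ≤ R := fun p hp => le_sup' (dist · c) hp
  have hcT := mem_convexHull_filter_dist_eq hcP hR fun x hx => by
    obtain ⟨p, hp, hpx⟩ := exists_mem_eq_sup' hP (dist · x)
    exact ⟨p, hp, hpx ▸ hmin hx⟩
  have h2R := two_mul_sq_le_of_mem_convexHull hcT (fun p hp => (mem_filter.1 hp).2)
    fun p hp q hq => hd p (mem_of_mem_filter p hp) q (mem_of_mem_filter q hq)
  obtain ⟨p₀, hp₀⟩ := hP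
  refine ⟨c, fun p hp => (hR p hp).trans (le_mul_sqrt_of_two_mul_sq_le
    (dist_nonneg.trans (hR p₀ hp₀)) (dist_nonneg.trans (hd p₀ hp₀ p₀ hp₀)) ?_ ?_ h2R)⟩
  · exact_mod_cast card_pos.2 (coe_nonempty.1 (convexHull_nonempty_iff.1 ⟨c, hcT⟩))
  · exact_mod_cast (card_filter_le P _).trans hcard

theorem exists_subset_closedBall_mul_sqrt [FiniteDimensional ℝ E] {K : Set E} {d : ℝ}
    (hd : ∀ x ∈ K, ∀ y ∈ K, dist x y ≤ d) :
    ∃ c, K ⊆ closedBall c (d * √(finrank ℝ E / (2 * finrank ℝ E + 2))) := by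
  set r := d * √(finrank ℝ E / (2 * finrank ℝ E + 2))
  obtain ⟨c, hc⟩ : (⋂ x : K, closedBall (x : E) r).Nonempty := by
    refine Convex.helly_theorem_compact' (𝕜 := ℝ) (fun _ => convex_closedBall _ _)
      (fun _ => isCompact_closedBall _ _) fun I hI => ?_
    obtain ⟨c, hc⟩ := exists_forall_dist_le_mul_sqrt_of_card_le
      (P := I.map (Function.Embedding.subtype _)) (by rwa [card_map]) (by
        simp only [Finset.mem_map, Function.Embedding.subtype_apply]
        rintro _ ⟨x, -, rfl⟩ _ ⟨y, -, rfl⟩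
        exact hd x x.2 y y.2)
    exact ⟨c, Set.mem_iInter₂.2 fun x hx => mem_closedBall_comm.1 (hc x (mem_map_of_mem _ hx))⟩
  exact ⟨c, fun x hx => mem_closedBall_comm.1 (Set.mem_iInter.1 hc ⟨x, hx⟩)⟩

end InnerProductSpace

section ConstantWidth

variable {n : ℕ} {K : Set (EuclideanSpace ℝ (Fin n))} {w : ℝ}

theorem HasConstantWidth.nonempty [Nontrivial (EuclideanSpace ℝ (Fin n))]
    (hw : HasConstantWidth K w) (hw0 : w ≠ 0) : K.Nonempty := by
  rw [Set.nonempty_iff_ne_empty]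
  rintro rfl
  obtain ⟨u, hu⟩ := exists_norm_eq (EuclideanSpace ℝ (Fin n)) zero_le_one
  simpa [eq_comm, hw0] using hw u hu

theorem HasConstantWidth.dist_le (hw : HasConstantWidth K w) (hw0 : 0 ≤ w)
    (hK : Bornology.IsBounded K) {x y : EuclideanSpace ℝ (Fin n)} (hx : x ∈ K) (hy : y ∈ K) :
    dist x y ≤ w := by
  rcases eq_or_ne x y with rfl | hxy
  · simpa using hw0
  have hxy' : x - y ≠ 0 := sub_ne_zero.2 hxy
  set u := (‖x - y‖⁻¹ : ℝ) • (x - y)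
  have hbdd : Bornology.IsBounded ((fun z => ⟪u, z⟫) '' K) :=
    (innerSL ℝ u).lipschitz.isBounded_image hK
  have hux : ⟪u, x⟫ - ⟪u, y⟫ = ‖x - y‖ := by
    rw [← inner_sub_right, real_inner_smul_left, real_inner_self_eq_norm_sq]
    field_simp
  have hsup : ⟪u, x⟫ ≤ sSup ((fun z => ⟪u, z⟫) '' K) := le_csSup hbdd.bddAbove ⟨x, hx, rfl⟩
  have hinf : sInf ((fun z => ⟪u, z⟫) '' K) ≤ ⟪u, y⟫ := csInf_le hbdd.bddBelow ⟨y, hy, rfl⟩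
  rw [dist_eq_norm, ← hux, ← hw u (norm_smul_inv_norm hxy')]
  linarith

theorem HasConstantWidth.closedBall_sub_subset (hw : HasConstantWidth K w) (hKconv : Convex ℝ K)
    (hKcl : IsClosed K) (hKne : K.Nonempty) {c : EuclideanSpace ℝ (Fin n)} {s : ℝ}
    (hc : K ⊆ closedBall c s) : closedBall c (w - s) ⊆ K := by
  intro x hx
  by_contra hxK
  -- `q` is the point of `K` nearest to `x`, so `K` lies beyond the hyperplane through `q`
  -- normal to `q - x`
  obtain ⟨q, hqK, hq⟩ := exists_mem_forall_norm_sub_sq_le_inner hKconv hKcl.isComplete hKne x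
  have hqx : q - x ≠ 0 := sub_ne_zero.2 (ne_of_mem_of_not_mem hqK hxK)
  set u := (‖q - x‖⁻¹ : ℝ) • (q - x)
  have hu : ‖u‖ = 1 := norm_smul_inv_norm hqx
  have hle : ∀ z, ⟪u, z⟫ ≤ ‖z‖ := fun z => (real_inner_le_norm u z).trans_eq (by rw [hu, one_mul])
  have hinf : ⟪u, x⟫ + ‖q - x‖ ≤ sInf ((fun z => ⟪u, z⟫) '' K) := by
    refine le_csInf (hKne.image _) ?_
    rintro _ ⟨z, hz, rfl⟩
    have hpos : 0 < ‖q - x‖ := norm_pos_iff.2 hqx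
    have : ‖q - x‖ ≤ ⟪u, z - x⟫ := by
      rw [real_inner_smul_left, real_inner_comm, le_inv_mul_iff₀ hpos, ← sq]
      exact hq z hz
    rw [inner_sub_right] at this
    linarith
  have hsup : sSup ((fun z => ⟪u, z⟫) '' K) ≤ ⟪u, c⟫ + s := by
    refine csSup_le (hKne.image _) ?_
    rintro _ ⟨z, hz, rfl⟩
    have := (hle (z - c)).trans (mem_closedBall_iff_norm.1 (hc hz))
    rw [inner_sub_right] at this
    linarith
  have hx' := (hle (c - x)).trans (mem_closedBall_iff_norm'.1 hx)
  rw [inner_sub_right] at hx'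
  have := hw u hu
  linarith [norm_pos_iff.2 hqx]

theorem le_inradius [Nontrivial (EuclideanSpace ℝ (Fin n))] (hK : Bornology.IsBounded K)
    {c : EuclideanSpace ℝ (Fin n)} {r : ℝ} (hr : 0 ≤ r) (hball : closedBall c r ⊆ K) :
    r ≤ inradius K := by
  refine le_csSup ⟨diam K / 2, ?_⟩ ⟨hr, c, hball⟩
  rintro r' ⟨hr', c', hball'⟩
  have := diam_mono hball' hK
  rw [diam_closedBall_eq c' hr'] at this
  linarith

theorem circumradius_le {c : EuclideanSpace ℝ (Fin n)} {R : ℝ} (hR : 0 ≤ R)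
    (hball : K ⊆ closedBall c R) : circumradius K ≤ R :=
  csInf_le ⟨0, fun _ h => h.1⟩ ⟨hR, c, hball⟩

end ConstantWidth

theorem Real.sqrt_div_two_mul_add_two_lt_one {x : ℝ} (hx : 0 ≤ x) : √(x / (2 * x + 2)) < 1 := by
  rw [Real.sqrt_lt' one_pos, one_pow, div_lt_one (by positivity)]
  linarith

theorem Real.sqrt_div_two_mul_add_two_div_one_sub {x : ℝ} (hx : 0 ≤ x) :
    √(x / (2 * x + 2)) / (1 - √(x / (2 * x + 2))) = (√(2 * x ^ 2 + 2 * x) + x) / (x + 2) := by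
  set s := √(x / (2 * x + 2))
  have hs : s < 1 := Real.sqrt_div_two_mul_add_two_lt_one hx
  have hs2 : (2 * x + 2) * s ^ 2 = x := by
    rw [Real.sq_sqrt (by positivity)]
    field_simp
  have hsqrt : √(2 * x ^ 2 + 2 * x) = (2 * x + 2) * s := by
    rw [← Real.sqrt_sq (by positivity : 0 ≤ (2 * x + 2) * s)]
    congr 1
    linear_combination (-(2 * x + 2)) * hs2
  rw [hsqrt, div_eq_div_iff (by linarith) (by positivity)]
  linear_combination hs2

theorem stmt_17_general (n : ℕ) (hn : 0 < n) (K : Set (EuclideanSpace ℝ (Fin n)))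
    (hKc : IsCompact K) (hKconv : Convex ℝ K)
    (hw : HasConstantWidth K 1) :
    1 - Real.sqrt (n / (2 * n + 2)) ≤ inradius K ∧
      circumradius K ≤ Real.sqrt (n / (2 * n + 2)) ∧
      circumradius K / inradius K ≤ (Real.sqrt (2 * n ^ 2 + 2 * n) + n) / (n + 2) := by
  have : Nontrivial (EuclideanSpace ℝ (Fin n)) :=
    Module.nontrivial_of_finrank_pos (by rwa [finrank_euclideanSpace_fin])
  set s := √(n / (2 * n + 2))
  have hs1 : s < 1 := Real.sqrt_div_two_mul_add_two_lt_one n.cast_nonneg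
  have hdiam : ∀ x ∈ K, ∀ y ∈ K, dist x y ≤ 1 := fun x hx y hy =>
    hw.dist_le zero_le_one hKc.isBounded hx hy
  obtain ⟨c, hc⟩ := exists_subset_closedBall_mul_sqrt hdiam
  rw [finrank_euclideanSpace_fin, one_mul] at hc
  have hr : 1 - s ≤ inradius K := le_inradius hKc.isBounded (by linarith)
    (hw.closedBall_sub_subset hKconv hKc.isClosed (hw.nonempty one_ne_zero) hc)
  have hR : circumradius K ≤ s := circumradius_le (Real.sqrt_nonneg _) hc
  refine ⟨hr, hR, ?_⟩
  rw [← Real.sqrt_div_two_mul_add_two_div_one_sub n.cast_nonneg]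
  exact div_le_div₀ (Real.sqrt_nonneg _) hR (by linarith) hr

theorem stmt_17 (n : ℕ) (hn : 0 < n) (K : Set (EuclideanSpace ℝ (Fin n)))
    (hKc : IsCompact K) (hKconv : Convex ℝ K) (hKint : (interior K).Nonempty)
    (hw : HasConstantWidth K 1) :
    1 - Real.sqrt (n / (2 * n + 2)) ≤ inradius K ∧
      circumradius K ≤ Real.sqrt (n / (2 * n + 2)) ∧
      circumradius K / inradius K ≤ (Real.sqrt (2 * n ^ 2 + 2 * n) + n) / (n + 2) :=
  stmt_17_general n hn K hKc hKconv hw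
end

section
/- Every bounded set X ⊆ ℝⁿ is contained in a convex body X̂ of constant width equal to the diameter of X, with d(X) = d(X̂); consequently, if every convex body of constant width 1 in ℝⁿ can be partitioned into n+1 parts of diameter strictly less than 1, then every bounded set in ℝⁿ of positive diameter can be partitioned into n+1 subsets of strictly smaller diameter. -/
open Metric Bornology Pointwise RealInnerProductSpace

section PseudoMetricSpace

variable {α : Type*} [PseudoMetricSpace α] {d : ℝ} {A B : Set α}

def ballPolar (d : ℝ) (A : Set α) : Set α := {z | ∀ a ∈ A, dist z a ≤ d}

lemma ballPolar_anti (h : A ⊆ B) : ballPolar d B ⊆ ballPolar d A :=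
  fun _ hz a ha => hz a (h ha)

lemma subset_ballPolar_ballPolar : A ⊆ ballPolar d (ballPolar d A) :=
  fun a ha _ hz => dist_comm a _ ▸ hz a ha

lemma ballPolar_ballPolar_ballPolar :
    ballPolar d (ballPolar d (ballPolar d A)) = ballPolar d A :=
  subset_antisymm (ballPolar_anti subset_ballPolar_ballPolar) subset_ballPolar_ballPolar

lemma ballPolar_eq_biInter : ballPolar d A = ⋂ a ∈ A, closedBall a d := by
  ext z
  simp [ballPolar]

lemma isClosed_ballPolar : IsClosed (ballPolar d A) := by
  rw [ballPolar_eq_biInter]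
  exact isClosed_biInter fun a _ => isClosed_closedBall

lemma isCompact_ballPolar [ProperSpace α] (hA : A.Nonempty) : IsCompact (ballPolar d A) := by
  obtain ⟨a, ha⟩ := hA
  exact (isCompact_closedBall a d).of_isClosed_subset isClosed_ballPolar fun z hz => hz a ha

lemma subset_ballPolar_diam (hA : IsBounded A) : A ⊆ ballPolar (diam A) A :=
  fun _ hx _ hy => dist_le_diam_of_mem hA hx hy

end PseudoMetricSpace

lemma convex_ballPolar {E : Type*} [SeminormedAddCommGroup E] [NormedSpace ℝ E] (d : ℝ)
    (A : Set E) : Convex ℝ (ballPolar d A) := by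
  rw [ballPolar_eq_biInter]
  exact convex_iInter₂ fun a _ => convex_closedBall a d

section InnerProductSpace

variable {E : Type*} [NormedAddCommGroup E] [InnerProductSpace ℝ E] {d : ℝ} {A B C : Set E}
  {p e u : E}

lemma exists_add_smul_mem_ballPolar (hC : IsCompact C) (hp : p ∈ ballPolar d C)
    (he : ∀ c ∈ C, dist p c = d → ⟪e, p - c⟫ < 0) : ∃ t > (0 : ℝ), p + t • e ∈ ballPolar d C := by
  rcases C.eq_empty_or_nonempty with rfl | hCne
  · exact ⟨1, one_pos, fun c hc => hc.elim⟩
  -- By compactness every `c ∈ C` is either uniformly inactive or uniformly decreasing along `e`.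
  obtain ⟨c₀, hc₀, hmin⟩ := hC.exists_isMinOn hCne
    (f := fun c => max (d ^ 2 - ‖p - c‖ ^ 2) (-⟪e, p - c⟫)) (by fun_prop)
  set m := max (d ^ 2 - ‖p - c₀‖ ^ 2) (-⟪e, p - c₀⟫)
  have hpc : ∀ c ∈ C, ‖p - c‖ ≤ d := fun c hc => dist_eq_norm p c ▸ hp c hc
  have hd : 0 ≤ d := (norm_nonneg _).trans (hpc c₀ hc₀)
  have hm : 0 < m := by
    refine lt_of_not_ge fun hm => ?_
    have hfar : d ^ 2 ≤ ‖p - c₀‖ ^ 2 := by linarith [(le_max_left _ _).trans hm]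
    have hactive : dist p c₀ = d := by
      rw [dist_eq_norm]
      exact le_antisymm (hpc c₀ hc₀) ((sq_le_sq₀ hd (norm_nonneg _)).1 hfar)
    linarith [he c₀ hc₀ hactive, (le_max_right _ _).trans hm]
  set K := 2 * ‖e‖ * d + ‖e‖ ^ 2 with hK
  set t := min 1 (m / (K + 1))
  have ht : 0 < t := by positivity
  have htK : t * K ≤ m := by
    calc t * K ≤ m / (K + 1) * (K + 1) := by gcongr <;> [exact min_le_right _ _; linarith]
      _ = m := div_mul_cancel₀ _ (by positivity)
  refine ⟨t, ht, fun c hc => ?_⟩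
  have hexp : dist (p + t • e) c ^ 2 = ‖p - c‖ ^ 2 + 2 * t * ⟪e, p - c⟫ + t ^ 2 * ‖e‖ ^ 2 := by
    rw [dist_eq_norm, show p + t • e - c = p - c + t • e by abel, norm_add_sq_real, norm_smul,
      real_inner_smul_right, real_inner_comm, Real.norm_of_nonneg ht.le]
    ring
  have hcs : ⟪e, p - c⟫ ≤ ‖e‖ * d :=
    (real_inner_le_norm _ _).trans (mul_le_mul_of_nonneg_left (hpc c hc) (norm_nonneg e))
  have ht1 : t ≤ 1 := min_le_left _ _
  rw [← sq_le_sq₀ dist_nonneg hd, hexp]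
  have htt : t ^ 2 * ‖e‖ ^ 2 ≤ t * ‖e‖ ^ 2 := by gcongr; nlinarith
  have hte : t * ‖e‖ ^ 2 ≤ m := by
    refine le_trans ?_ htK
    rw [hK]
    nlinarith [mul_nonneg ht.le (mul_nonneg (norm_nonneg e) hd)]
  rcases le_max_iff.mp (show m ≤ _ from hmin hc) with h | h
  · have : t * ⟪e, p - c⟫ ≤ t * (‖e‖ * d) := mul_le_mul_of_nonneg_left hcs ht.le
    nlinarith
  · have : t * m ≤ t * -⟪e, p - c⟫ := mul_le_mul_of_nonneg_left h ht.le
    nlinarith [pow_le_pow_left₀ (norm_nonneg _) (hpc c hc) 2]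

lemma ballPolar_subset_closedBall_of_isMaxOn (hd : 0 < d) (hC : IsCompact C) (hu : ‖u‖ = 1)
    (hp : p ∈ ballPolar d C) (hmax : IsMaxOn (fun y => ⟪u, y⟫) (ballPolar d C) p) :
    ballPolar d C ⊆ closedBall (p - d • u) d := by
  intro x hx
  by_contra hfar
  set v := x - p with hv_def
  have hv : 0 < ‖v‖ ^ 2 + 2 * d * ⟪u, v⟫ := by
    have : d ^ 2 < ‖v + d • u‖ ^ 2 := by
      rw [mem_closedBall, not_le, dist_eq_norm,
        show x - (p - d • u) = v + d • u by rw [hv_def]; abel] at hfar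
      exact pow_lt_pow_left₀ hfar hd.le two_ne_zero
    rw [norm_add_sq_real, norm_smul, hu, real_inner_smul_right, real_inner_comm,
      Real.norm_of_nonneg hd.le] at this
    linarith
  -- Move `p` along `e = l • u + v`: this raises `⟪u, ·⟫` and strictly shortens every active
  -- distance `dist p c = d`.
  obtain ⟨l, hl, hld⟩ : ∃ l, max (-⟪u, v⟫) 0 < l ∧ l < ‖v‖ ^ 2 / (2 * d) := by
    refine exists_between (max_lt ?_ ?_)
    · rw [lt_div_iff₀ (by positivity)]; linarith
    · have : v ≠ 0 := by rintro hv0; simp [hv0] at hv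
      positivity
  set e := l • u + v
  have hactive : ∀ c ∈ C, dist p c = d → ⟪e, p - c⟫ < 0 := by
    intro c hc hpc
    have hxc : ‖v + (p - c)‖ ^ 2 ≤ d ^ 2 := by
      rw [show v + (p - c) = x - c by rw [hv_def]; abel, ← dist_eq_norm]
      exact pow_le_pow_left₀ dist_nonneg (hx c hc) 2
    rw [norm_add_sq_real, ← dist_eq_norm p c, hpc] at hxc
    have hcs : ⟪u, p - c⟫ ≤ d := by
      simpa [hu, ← dist_eq_norm, hpc] using real_inner_le_norm u (p - c)
    rw [lt_div_iff₀ (by positivity)] at hld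
    have : l * ⟪u, p - c⟫ ≤ l * d :=
      mul_le_mul_of_nonneg_left hcs ((le_max_right _ _).trans hl.le)
    simp only [e, inner_add_left, real_inner_smul_left]
    nlinarith
  obtain ⟨t, ht, hte⟩ := exists_add_smul_mem_ballPolar hC hp hactive
  have hrise : ⟪u, p + t • e⟫ = ⟪u, p⟫ + t * (l + ⟪u, v⟫) := by
    simp only [e, inner_add_right, real_inner_smul_right, real_inner_self_eq_norm_sq, hu]
    ring
  have := hmax hte
  simp only [Set.mem_ofPred_eq, hrise] at this
  nlinarith [le_max_left (-⟪u, v⟫) 0]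

lemma sSup_sub_sInf_inner_of_ballPolar (hd : 0 < d) (hA : IsCompact A) (hAne : A.Nonempty)
    (hB : IsCompact B) (hAB : A = ballPolar d B) (hBA : B = ballPolar d A) (hu : ‖u‖ = 1) :
    sSup ((fun x => ⟪u, x⟫) '' A) - sInf ((fun x => ⟪u, x⟫) '' B) = d := by
  obtain ⟨p, hpA, hmax⟩ :=
    hA.exists_isMaxOn hAne (by fun_prop : Continuous fun x => ⟪u, x⟫).continuousOn
  have hpB : p - d • u ∈ B := by
    rw [hAB] at hpA hmax
    rw [hBA]
    intro a ha
    rw [dist_comm, ← mem_closedBall]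
    exact ballPolar_subset_closedBall_of_isMaxOn hd hB hu hpA hmax (hAB ▸ ha)
  have hleast : IsLeast ((fun x => ⟪u, x⟫) '' B) (⟪u, p⟫ - d) := by
    refine ⟨⟨p - d • u, hpB, ?_⟩, ?_⟩
    · show ⟪u, p - d • u⟫ = _
      rw [inner_sub_right, real_inner_smul_right, real_inner_self_eq_norm_sq, hu]; ring
    · rintro _ ⟨b, hb, rfl⟩
      have := real_inner_le_norm u (p - b)
      rw [hu, one_mul, ← dist_eq_norm, dist_comm, inner_sub_right] at this
      linarith [(hBA ▸ hb : b ∈ ballPolar d A) p hpA]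
  have hgreatest : IsGreatest ((fun x => ⟪u, x⟫) '' A) ⟪u, p⟫ :=
    ⟨⟨p, hpA, rfl⟩, by rintro _ ⟨a, ha, rfl⟩; exact hmax ha⟩
  rw [hgreatest.csSup_eq, hleast.csInf_eq]
  ring

end InnerProductSpace

lemma sSup_image_smul_add_smul {E : Type*} [AddCommGroup E] [Module ℝ E] {A B : Set E}
    (ℓ : E →ₗ[ℝ] ℝ) {a b : ℝ} (ha : 0 ≤ a) (hb : 0 ≤ b) (hA : A.Nonempty) (hB : B.Nonempty)
    (hAb : BddAbove (ℓ '' A)) (hBb : BddAbove (ℓ '' B)) :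
    sSup (ℓ '' (a • A + b • B)) = a * sSup (ℓ '' A) + b * sSup (ℓ '' B) := by
  rw [Set.image_add, image_smul_set, image_smul_set,
    csSup_add (hA.image ℓ).smul_set (hAb.smul_of_nonneg ha) (hB.image ℓ).smul_set
      (hBb.smul_of_nonneg hb), Real.sSup_smul_of_nonneg ha, Real.sSup_smul_of_nonneg hb]
  rfl

lemma sInf_image_smul_add_smul {E : Type*} [AddCommGroup E] [Module ℝ E] {A B : Set E}
    (ℓ : E →ₗ[ℝ] ℝ) {a b : ℝ} (ha : 0 ≤ a) (hb : 0 ≤ b) (hA : A.Nonempty) (hB : B.Nonempty)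
    (hAb : BddBelow (ℓ '' A)) (hBb : BddBelow (ℓ '' B)) :
    sInf (ℓ '' (a • A + b • B)) = a * sInf (ℓ '' A) + b * sInf (ℓ '' B) := by
  rw [Set.image_add, image_smul_set, image_smul_set,
    csInf_add (hA.image ℓ).smul_set (hAb.smul_of_nonneg ha) (hB.image ℓ).smul_set
      (hBb.smul_of_nonneg hb), Real.sInf_smul_of_nonneg ha, Real.sInf_smul_of_nonneg hb]
  rfl

namespace HasConstantWidth

variable {n : ℕ} {K : Set (EuclideanSpace ℝ (Fin n))} {w : ℝ}

lemma smul (h : HasConstantWidth K w) {c : ℝ} (hc : 0 ≤ c) :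
    HasConstantWidth (c • K) (c * w) := by
  intro u hu
  have himage : (fun x => ⟪u, x⟫) '' (c • K) = c • (fun x => ⟪u, x⟫) '' K :=
    image_smul_set (innerₛₗ ℝ u) c K
  rw [himage, Real.sSup_smul_of_nonneg hc, Real.sInf_smul_of_nonneg hc, smul_eq_mul, smul_eq_mul,
    ← mul_sub, h u hu]

lemma diam_le (h : HasConstantWidth K w) (hK : IsBounded K) (hw : 0 ≤ w) : diam K ≤ w := by
  refine diam_le_of_forall_dist_le hw fun x hx y hy => ?_
  rcases eq_or_ne x y with rfl | hxy
  · simpa using hw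
  set u := ‖x - y‖⁻¹ • (x - y)
  have hu : ‖u‖ = 1 := norm_smul_inv_norm (sub_ne_zero.2 hxy)
  have hbdd : IsBounded ((fun z => ⟪u, z⟫) '' K) := (innerSL ℝ u).lipschitz.isBounded_image hK
  have hux : ⟪u, x⟫ ≤ sSup ((fun z => ⟪u, z⟫) '' K) := le_csSup hbdd.bddAbove ⟨x, hx, rfl⟩
  have huy : sInf ((fun z => ⟪u, z⟫) '' K) ≤ ⟪u, y⟫ := csInf_le hbdd.bddBelow ⟨y, hy, rfl⟩
  have hdist : ⟪u, x⟫ - ⟪u, y⟫ = dist x y := by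
    rw [← inner_sub_right, real_inner_smul_left, real_inner_self_eq_norm_sq, dist_eq_norm,
      sq, inv_mul_cancel_left₀ (norm_ne_zero_iff.2 (sub_ne_zero.2 hxy))]
  linarith [h u hu]

lemma interior_nonempty (h : HasConstantWidth K w) (hconv : Convex ℝ K) (hK : K.Nonempty)
    (hw : w ≠ 0) : (interior K).Nonempty := by
  obtain ⟨x₀, hx₀⟩ := hK
  rw [hconv.interior_nonempty_iff_affineSpan_eq_top]
  by_contra hspan
  have hperp : (vectorSpan ℝ K)ᗮ ≠ ⊥ := by
    rw [Ne, Submodule.orthogonal_eq_bot_iff,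
      ← AffineSubspace.affineSpan_eq_top_iff_vectorSpan_eq_top_of_nonempty ℝ _ _ ⟨x₀, hx₀⟩]
    exact hspan
  obtain ⟨v, hv, hv0⟩ := Submodule.exists_mem_ne_zero_of_ne_bot hperp
  set u := ‖v‖⁻¹ • v
  have hu : ‖u‖ = 1 := norm_smul_inv_norm hv0
  have hconst : (fun x => ⟪u, x⟫) '' K = {⟪u, x₀⟫} := by
    refine Set.eq_singleton_iff_unique_mem.2 ⟨⟨x₀, hx₀, rfl⟩, ?_⟩
    rintro _ ⟨x, hx, rfl⟩
    have hperp : ⟪x - x₀, u⟫ = 0 := (Submodule.mem_orthogonal _ u).1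
      (Submodule.smul_mem _ _ hv) _ (vsub_mem_vectorSpan ℝ hx hx₀)
    rw [real_inner_comm, inner_sub_right] at hperp
    linarith
  have := h u hu
  rw [hconst, csSup_singleton, csInf_singleton, sub_self] at this
  exact hw this.symm

end HasConstantWidth

lemma exists_hasConstantWidth_superset {n : ℕ} {X : Set (EuclideanSpace ℝ (Fin n))}
    (hX : IsBounded X) (hXd : 0 < diam X) :
    ∃ W : Set (EuclideanSpace ℝ (Fin n)), X ⊆ W ∧ IsCompact W ∧ Convex ℝ W ∧
      (interior W).Nonempty ∧ HasConstantWidth W (diam X) ∧ diam W = diam X := by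
  have hXne : X.Nonempty := Set.nonempty_iff_ne_empty.2 fun h => by simp [h] at hXd
  set d := diam X
  set K₁ := ballPolar d X
  set K₂ := ballPolar d K₁
  have hXK₁ : X ⊆ K₁ := subset_ballPolar_diam hX
  have hXK₂ : X ⊆ K₂ := subset_ballPolar_ballPolar
  have hK₁ : IsCompact K₁ := isCompact_ballPolar hXne
  have hK₂ : IsCompact K₂ := isCompact_ballPolar (hXne.mono hXK₁)
  have hK₁₂ : K₁ = ballPolar d K₂ := ballPolar_ballPolar_ballPolar.symm
  set W := (2⁻¹ : ℝ) • K₁ + (2⁻¹ : ℝ) • K₂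
  have hXW : X ⊆ W := fun x hx => by
    convert Set.add_mem_add (Set.smul_mem_smul_set (a := (2⁻¹ : ℝ)) (hXK₁ hx))
      (Set.smul_mem_smul_set (a := (2⁻¹ : ℝ)) (hXK₂ hx)) using 1
    rw [← add_smul]
    norm_num
  have hWc : IsCompact W := (hK₁.smul _).add (hK₂.smul _)
  have hWw : HasConstantWidth W d := fun u hu => by
    have hbdd : ∀ {K}, IsCompact K → IsBounded (innerₛₗ ℝ u '' K) := fun hK =>
      (innerSL ℝ u).lipschitz.isBounded_image hK.isBounded
    have h₁₂ := sSup_sub_sInf_inner_of_ballPolar hXd hK₁ (hXne.mono hXK₁) hK₂ hK₁₂ rfl hu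
    have h₂₁ := sSup_sub_sInf_inner_of_ballPolar hXd hK₂ (hXne.mono hXK₂) hK₁ rfl hK₁₂ hu
    change sSup (innerₛₗ ℝ u '' W) - sInf (innerₛₗ ℝ u '' W) = d
    rw [sSup_image_smul_add_smul _ (by norm_num) (by norm_num) (hXne.mono hXK₁)
        (hXne.mono hXK₂) (hbdd hK₁).bddAbove (hbdd hK₂).bddAbove,
      sInf_image_smul_add_smul _ (by norm_num) (by norm_num) (hXne.mono hXK₁)
        (hXne.mono hXK₂) (hbdd hK₁).bddBelow (hbdd hK₂).bddBelow, coe_innerₛₗ_apply]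
    linarith
  have hWconv : Convex ℝ W := ((convex_ballPolar _ _).smul _).add ((convex_ballPolar _ _).smul _)
  exact ⟨W, hXW, hWc, hWconv, hWw.interior_nonempty hWconv (hXne.mono hXW) hXd.ne', hWw,
    le_antisymm (hWw.diam_le hWc.isBounded hXd.le) (diam_mono hXW hWc.isBounded)⟩

lemma diam_sep_lt_of_smul_inv {E ι : Type*} [NormedAddCommGroup E] [NormedSpace ℝ E]
    {X W : Set E} (hXW : X ⊆ W) (hW : IsBounded W) {c : ℝ} (hc : 0 < c) (f : E → ι)
    (hf : ∀ i, diam {y ∈ c⁻¹ • W | f y = i} < 1) (i : ι) :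
    diam {x ∈ X | f (c⁻¹ • x) = i} < c := by
  set S := {y ∈ c⁻¹ • W | f y = i}
  have hsub : {x ∈ X | f (c⁻¹ • x) = i} ⊆ c • S := fun x hx =>
    ⟨c⁻¹ • x, ⟨Set.smul_mem_smul_set (hXW hx.1), hx.2⟩, smul_inv_smul₀ hc.ne' x⟩
  have hS : IsBounded S := (hW.smul₀ c⁻¹).subset (Set.sep_subset _ _)
  calc diam {x ∈ X | f (c⁻¹ • x) = i} ≤ diam (c • S) := diam_mono hsub (hS.smul₀ c)
    _ = c * diam S := by rw [diam_smul₀, Real.norm_of_nonneg hc.le]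
    _ < c * 1 := mul_lt_mul_of_pos_left (hf i) hc
    _ = c := mul_one c

theorem stmt_19 (n : ℕ) :
    (∀ X : Set (EuclideanSpace ℝ (Fin n)), Bornology.IsBounded X → X.Nonempty →
      0 < Metric.diam X →
      ∃ W : Set (EuclideanSpace ℝ (Fin n)), X ⊆ W ∧ IsCompact W ∧ Convex ℝ W ∧
        (interior W).Nonempty ∧ HasConstantWidth W (Metric.diam X) ∧
        Metric.diam W = Metric.diam X) ∧
    ((∀ W : Set (EuclideanSpace ℝ (Fin n)), IsCompact W → Convex ℝ W →
        (interior W).Nonempty → HasConstantWidth W 1 →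
        ∃ f : EuclideanSpace ℝ (Fin n) → Fin (n + 1),
          ∀ i, Metric.diam {x ∈ W | f x = i} < 1) →
      ∀ X : Set (EuclideanSpace ℝ (Fin n)), Bornology.IsBounded X →
        0 < Metric.diam X →
        ∃ f : EuclideanSpace ℝ (Fin n) → Fin (n + 1),
          ∀ i, Metric.diam {x ∈ X | f x = i} < Metric.diam X) := by
  refine ⟨fun X hX _ hXd => exists_hasConstantWidth_superset hX hXd, fun H X hX hXd => ?_⟩
  obtain ⟨W, hXW, hWc, hWconv, hWint, hWw, -⟩ := exists_hasConstantWidth_superset hX hXd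
  have hd : (diam X)⁻¹ ≠ 0 := inv_ne_zero hXd.ne'
  obtain ⟨f, hf⟩ := H ((diam X)⁻¹ • W) (hWc.smul _) (hWconv.smul _)
    (by rw [interior_smul₀ hd]; exact hWint.smul_set)
    (by simpa [inv_mul_cancel₀ hXd.ne'] using hWw.smul (inv_nonneg.2 hXd.le))
  exact ⟨fun x => f ((diam X)⁻¹ • x), diam_sep_lt_of_smul_inv hXW hWc.isBounded hXd f hf⟩
end
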